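/- arXiv:2409.17877 — 3 statements merged into one kernel-verified Lean document; each statement's English description precedes it below -/
import Mathlib

section
/- For all q ∈ (0,1), the derivative of q ↦ q²K(q) − K(q) + E(q) equals q·K(q). -/
/-!
Write `w = 1 - x² sin² θ`, so that `x² K - K + E = ∫₀^{π/2} ((x² - 1) / √w + √w) dθ`.
For `x² < 1` the `x`-derivative of the integrand is `x cos² θ (2 - x² sin² θ) / w^{3/2}`, which is
jointly continuous, so one may differentiate under the integral sign. That derivative equals
`x / √w + ∂/∂θ (x sin θ cos θ / √w)`, and the last term integrates to zero because `sin θ cos θ`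
vanishes at `0` and `π/2`; what remains is `x K`.
-/

open Real Set Filter

noncomputable def Kc (q : ℝ) : ℝ := ∫ θ in (0:ℝ)..(π/2), 1 / Real.sqrt (1 - q^2 * Real.sin θ^2)

noncomputable def Ec (q : ℝ) : ℝ := ∫ θ in (0:ℝ)..(π/2), Real.sqrt (1 - q^2 * Real.sin θ^2)

noncomputable def fc (q : ℝ) : ℝ := (4*q^4 - 5*q^2 + 1) * Kc q + (-8*q^4 + 8*q^2 - 1) * Ec q

open MeasureTheory Metric

theorem intervalIntegral.hasDerivAt_integral_of_continuousOn {E : Type*} [NormedAddCommGroup E]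
    [NormedSpace ℝ E] {F F' : ℝ → ℝ → E} {U : Set ℝ} {a b x₀ : ℝ} (hU : IsOpen U) (hx₀ : x₀ ∈ U)
    (hF : ∀ x ∈ U, ContinuousOn (F x) (uIcc a b))
    (hF' : ContinuousOn (Function.uncurry F') (U ×ˢ uIcc a b))
    (hdiff : ∀ x ∈ U, ∀ t ∈ uIcc a b, HasDerivAt (F · t) (F' x t) x) :
    HasDerivAt (fun x => ∫ t in a..b, F x t) (∫ t in a..b, F' x₀ t) x₀ := by
  obtain ⟨r, hr, hrU⟩ := nhds_basis_closedBall.mem_iff.1 (hU.mem_nhds hx₀)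
  obtain ⟨C, hC⟩ := ((isCompact_closedBall x₀ r).prod isCompact_uIcc).exists_bound_of_continuousOn
    (hF'.mono (prod_mono hrU subset_rfl))
  refine (hasDerivAt_integral_of_dominated_loc_of_deriv_le (bound := fun _ => C)
    (ball_mem_nhds x₀ hr) ?_ (hF x₀ hx₀).intervalIntegrable ?_ ?_ intervalIntegrable_const ?_).2
  · filter_upwards [hU.mem_nhds hx₀] with x hx
    exact ((hF x hx).aestronglyMeasurable measurableSet_uIcc).mono_set uIoc_subset_uIcc
  · exact ((hF'.uncurry_left x₀ hx₀).aestronglyMeasurable measurableSet_uIcc).mono_set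
      uIoc_subset_uIcc
  · exact ae_of_all _ fun t ht x hx => hC (x, t) ⟨ball_subset_closedBall hx, uIoc_subset_uIcc ht⟩
  · exact ae_of_all _ fun t ht x hx =>
      hdiff x (hrU (ball_subset_closedBall hx)) t (uIoc_subset_uIcc ht)

lemma one_sub_sq_mul_sin_sq_pos {x : ℝ} (hx : x ^ 2 < 1) (θ : ℝ) : 0 < 1 - x ^ 2 * sin θ ^ 2 := by
  nlinarith [sin_sq_le_one θ, sq_nonneg (sin θ)]

noncomputable def ellipticIntegrand (x θ : ℝ) : ℝ :=
  (x ^ 2 - 1) / √(1 - x ^ 2 * sin θ ^ 2) + √(1 - x ^ 2 * sin θ ^ 2)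

noncomputable def ellipticIntegrandDeriv (x θ : ℝ) : ℝ :=
  x * cos θ ^ 2 * (2 - x ^ 2 * sin θ ^ 2) / ((1 - x ^ 2 * sin θ ^ 2) * √(1 - x ^ 2 * sin θ ^ 2))

lemma continuous_ellipticIntegrand {x : ℝ} (hx : x ^ 2 < 1) : Continuous (ellipticIntegrand x) :=
  (continuous_const.div (by fun_prop)
    fun θ => (sqrt_pos.2 (one_sub_sq_mul_sin_sq_pos hx θ)).ne').add (by fun_prop)

lemma continuous_div_sqrt_one_sub_sq_mul_sin_sq {x : ℝ} (hx : x ^ 2 < 1) (a : ℝ) :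
    Continuous fun θ => a / √(1 - x ^ 2 * sin θ ^ 2) :=
  continuous_const.div (by fun_prop) fun θ => (sqrt_pos.2 (one_sub_sq_mul_sin_sq_pos hx θ)).ne'

lemma continuousOn_ellipticIntegrandDeriv :
    ContinuousOn (Function.uncurry ellipticIntegrandDeriv) ({x | x ^ 2 < 1} ×ˢ univ) := by
  refine ContinuousOn.div (by fun_prop) (by fun_prop) fun p hp => ?_
  have hw := one_sub_sq_mul_sin_sq_pos hp.1 p.2
  exact mul_ne_zero hw.ne' (sqrt_pos.2 hw).ne'

lemma hasDerivAt_ellipticIntegrand {x : ℝ} (hx : x ^ 2 < 1) (θ : ℝ) :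
    HasDerivAt (ellipticIntegrand · θ) (ellipticIntegrandDeriv x θ) x := by
  have hw := one_sub_sq_mul_sin_sq_pos hx θ
  have hsq : √(1 - x ^ 2 * sin θ ^ 2) ^ 2 = 1 - x ^ 2 * sin θ ^ 2 := sq_sqrt hw.le
  have hr : √(1 - x ^ 2 * sin θ ^ 2) ≠ 0 := (sqrt_pos.2 hw).ne'
  have hin : HasDerivAt (fun y : ℝ => 1 - y ^ 2 * sin θ ^ 2) (-(2 * x * sin θ ^ 2)) x := by
    simpa using ((hasDerivAt_pow 2 x).mul_const (sin θ ^ 2)).const_sub 1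
  have hroot := (hasDerivAt_sqrt hw.ne').comp x hin
  refine ((((hasDerivAt_pow 2 x).sub_const 1).div hroot hr).add hroot).congr_deriv ?_
  simp only [Function.comp_apply, ellipticIntegrandDeriv, cos_sq']
  generalize √(1 - x ^ 2 * sin θ ^ 2) = r at *
  field_simp
  rw [hsq]
  ring

lemma hasDerivAt_sin_mul_cos_div {x : ℝ} (hx : x ^ 2 < 1) (θ : ℝ) :
    HasDerivAt (fun t => x * sin t * cos t / √(1 - x ^ 2 * sin t ^ 2))
      (ellipticIntegrandDeriv x θ - x / √(1 - x ^ 2 * sin θ ^ 2)) θ := by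
  have hw := one_sub_sq_mul_sin_sq_pos hx θ
  have hsq : √(1 - x ^ 2 * sin θ ^ 2) ^ 2 = 1 - x ^ 2 * sin θ ^ 2 := sq_sqrt hw.le
  have hr : √(1 - x ^ 2 * sin θ ^ 2) ≠ 0 := (sqrt_pos.2 hw).ne'
  have hin : HasDerivAt (fun t => 1 - x ^ 2 * sin t ^ 2) (-(x ^ 2 * (2 * sin θ * cos θ))) θ := by
    simpa [mul_comm, mul_assoc, mul_left_comm] using
      (((hasDerivAt_sin θ).pow 2).const_mul (x ^ 2)).const_sub 1
  refine ((((hasDerivAt_sin θ).const_mul x).mul (hasDerivAt_cos θ)).div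
    ((hasDerivAt_sqrt hw.ne').comp θ hin) hr).congr_deriv ?_
  simp only [Function.comp_apply, Pi.mul_apply, ellipticIntegrandDeriv]
  generalize √(1 - x ^ 2 * sin θ ^ 2) = r at *
  field_simp
  rw [hsq, cos_sq']
  ring

lemma integral_ellipticIntegrandDeriv {x : ℝ} (hx : x ^ 2 < 1) :
    ∫ θ in 0..π / 2, ellipticIntegrandDeriv x θ = x * Kc x := by
  have hD : Continuous (ellipticIntegrandDeriv x) :=
    continuousOn_univ.1 (continuousOn_ellipticIntegrandDeriv.uncurry_left x hx)
  have hK := continuous_div_sqrt_one_sub_sq_mul_sin_sq hx x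
  have hFTC := intervalIntegral.integral_eq_sub_of_hasDerivAt
    (fun θ _ => hasDerivAt_sin_mul_cos_div hx θ) ((hD.sub hK).intervalIntegrable 0 (π / 2))
  rw [intervalIntegral.integral_sub (hD.intervalIntegrable _ _) (hK.intervalIntegrable _ _)]
    at hFTC
  simp only [sin_pi_div_two, cos_pi_div_two, sin_zero, mul_zero, zero_mul, zero_div, sub_self]
    at hFTC
  rw [Kc, ← intervalIntegral.integral_const_mul]
  simp_rw [mul_one_div]
  linarith

lemma sq_mul_Kc_sub_Kc_add_Ec {x : ℝ} (hx : x ^ 2 < 1) :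
    x ^ 2 * Kc x - Kc x + Ec x = ∫ θ in 0..π / 2, ellipticIntegrand x θ := by
  have hK := continuous_div_sqrt_one_sub_sq_mul_sin_sq hx (x ^ 2 - 1)
  have hE : Continuous fun θ => √(1 - x ^ 2 * sin θ ^ 2) := by fun_prop
  rw [show x ^ 2 * Kc x - Kc x + Ec x = (x ^ 2 - 1) * Kc x + Ec x by ring, Kc, Ec,
    ← intervalIntegral.integral_const_mul]
  simp_rw [mul_one_div]
  exact (intervalIntegral.integral_add (hK.intervalIntegrable _ _) (hE.intervalIntegrable _ _)).symm

theorem hasDerivAt_sq_mul_Kc_sub_Kc_add_Ec {x : ℝ} (hx : x ^ 2 < 1) :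
    HasDerivAt (fun q => q ^ 2 * Kc q - Kc q + Ec q) (x * Kc x) x := by
  have hU : IsOpen {y : ℝ | y ^ 2 < 1} := isOpen_lt (continuous_pow 2) continuous_const
  have hderiv := intervalIntegral.hasDerivAt_integral_of_continuousOn (a := 0) (b := π / 2) hU hx
    (fun y hy => (continuous_ellipticIntegrand hy).continuousOn)
    (continuousOn_ellipticIntegrandDeriv.mono (prod_mono subset_rfl (subset_univ _)))
    (fun y hy θ _ => hasDerivAt_ellipticIntegrand hy θ)
  rw [integral_ellipticIntegrandDeriv hx] at hderiv
  exact hderiv.congr_of_eventuallyEq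
    (eventually_of_mem (hU.mem_nhds hx) fun y hy => sq_mul_Kc_sub_Kc_add_Ec hy)

theorem stmt_4 (q : ℝ) (hq : q ∈ Ioo (0:ℝ) 1) :
    HasDerivAt (fun q => q^2 * Kc q - Kc q + Ec q) (q * Kc q) q :=
  hasDerivAt_sq_mul_Kc_sub_Kc_add_Ec (by nlinarith [hq.1, hq.2])
end

section
/- The unique root q̂ ∈ (1/√2, q*) of f(q) = (4q⁴ − 5q² + 1)K(q) + (−8q⁴ + 8q² − 1)E(q) satisfies 3/5 < q̂² < 2/3. -/
open Real Set Filter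

lemma aux_pos {q : ℝ} (hq : q^2 < 1) (θ : ℝ) : 0 < 1 - q^2 * Real.sin θ^2 := by
  nlinarith [Real.sin_sq_le_one θ, sq_nonneg q, sq_nonneg (Real.sin θ), sq_nonneg (q * Real.sin θ)]

lemma contE (q : ℝ) : Continuous (fun θ : ℝ => Real.sqrt (1 - q^2 * Real.sin θ^2)) := by
  apply Real.continuous_sqrt.comp
  continuity

lemma contK {q : ℝ} (hq : q^2 < 1) :
    Continuous (fun θ : ℝ => 1 / Real.sqrt (1 - q^2 * Real.sin θ^2)) := by
  apply Continuous.div continuous_const (contE q)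
  intro θ
  exact ne_of_gt (Real.sqrt_pos.2 (aux_pos hq θ))

lemma intE (q : ℝ) : IntervalIntegrable
    (fun θ : ℝ => Real.sqrt (1 - q^2 * Real.sin θ^2)) MeasureTheory.volume 0 (π/2) :=
  (contE q).intervalIntegrable _ _

lemma intK {q : ℝ} (hq : q^2 < 1) : IntervalIntegrable
    (fun θ : ℝ => 1 / Real.sqrt (1 - q^2 * Real.sin θ^2)) MeasureTheory.volume 0 (π/2) :=
  (contK hq).intervalIntegrable _ _

lemma Ec_anti {a b : ℝ} (ha : 0 ≤ a) (hab : a ≤ b) : Ec b ≤ Ec a := by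
  unfold Ec
  apply intervalIntegral.integral_mono_on (by positivity) (intE b) (intE a)
  intro θ _
  apply Real.sqrt_le_sqrt
  have hab2 : a^2 ≤ b^2 := by nlinarith
  nlinarith [mul_nonneg (sub_nonneg.2 hab2) (sq_nonneg (Real.sin θ))]

lemma Kc_mono {a b : ℝ} (ha : 0 ≤ a) (hab : a ≤ b) (hb : b^2 < 1) : Kc a ≤ Kc b := by
  have ha2 : a^2 < 1 := by nlinarith
  unfold Kc
  apply intervalIntegral.integral_mono_on (by positivity) (intK ha2) (intK hb)
  intro θ _
  apply one_div_le_one_div_of_le (Real.sqrt_pos.2 (aux_pos hb θ))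
  apply Real.sqrt_le_sqrt
  have hab2 : a^2 ≤ b^2 := by nlinarith
  nlinarith [mul_nonneg (sub_nonneg.2 hab2) (sq_nonneg (Real.sin θ))]

lemma Ec_nonneg (q : ℝ) : 0 ≤ Ec q :=
  intervalIntegral.integral_nonneg (by positivity) (fun θ _ => Real.sqrt_nonneg _)

lemma Kc_pos {q : ℝ} (hq : q^2 < 1) : 0 < Kc q := by
  unfold Kc
  apply intervalIntegral.intervalIntegral_pos_of_pos (intK hq) _ (by positivity)
  intro θ
  exact div_pos one_pos (Real.sqrt_pos.2 (aux_pos hq θ))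

lemma lin_integral (c d : ℝ) :
    (∫ θ in (0:ℝ)..(π/2), (c - d * Real.sin θ^2)) = π/4 * (2*c - d) := by
  have h1 : IntervalIntegrable (fun θ : ℝ => Real.sin θ ^ 2) MeasureTheory.volume 0 (π/2) :=
    (Real.continuous_sin.pow 2).intervalIntegrable _ _
  rw [intervalIntegral.integral_sub intervalIntegrable_const (h1.const_mul d),
      intervalIntegral.integral_const, intervalIntegral.integral_const_mul, integral_sin_sq]
  simp [Real.sin_pi_div_two, Real.cos_pi_div_two]
  ring

/-- pointwise lower bound for sqrt on [2/5, 1] -/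
lemma P1 {u : ℝ} (h1 : 2/5 ≤ u) (h2 : u ≤ 1) : 61/100*u + 387/1000 ≤ Real.sqrt u := by
  have h0 : (0:ℝ) ≤ 61/100*u + 387/1000 := by linarith
  rw [Real.le_sqrt h0 (by linarith)]
  nlinarith [mul_nonneg (by linarith : (0:ℝ) ≤ u - 2/5) (by linarith : (0:ℝ) ≤ 1 - u)]

/-- pointwise upper bound for 1/sqrt on [2/5, 1] -/
lemma P2 {u : ℝ} (h1 : 2/5 ≤ u) (h2 : u ≤ 1) :
    1 / Real.sqrt u ≤ 197/100 - 96/100*u := by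
  have hu0 : (0:ℝ) < u := by linarith
  have hL : (0:ℝ) < 197/100 - 96/100*u := by linarith
  have key : (1:ℝ) ≤ (197/100 - 96/100*u)^2 * u := by
    nlinarith [mul_nonneg (mul_nonneg (by linarith : (0:ℝ) ≤ u - 2/5)
        (by linarith : (0:ℝ) ≤ 1 - u)) (by linarith : (0:ℝ) ≤ 1 - u),
      mul_nonneg (by linarith : (0:ℝ) ≤ u - 2/5) (by linarith : (0:ℝ) ≤ 1 - u)]
  have h2' : 1/(197/100 - 96/100*u) ≤ Real.sqrt u := by
    rw [Real.le_sqrt (by positivity) hu0.le, div_pow, one_pow, div_le_iff₀ (by positivity)]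
    linarith [key]
  calc 1 / Real.sqrt u ≤ 1 / (1/(197/100 - 96/100*u)) :=
        one_div_le_one_div_of_le (by positivity) h2'
    _ = 197/100 - 96/100*u := one_div_one_div _

/-- pointwise upper bound for sqrt on [0, ∞) -/
lemma P3 {u : ℝ} (h1 : 0 ≤ u) : Real.sqrt u ≤ 613/1000*u + 409/1000 := by
  have key : u ≤ (613/1000*u + 409/1000)^2 := by
    nlinarith [sq_nonneg (613/1000*u - 409/1000)]
  calc Real.sqrt u ≤ Real.sqrt ((613/1000*u + 409/1000)^2) := Real.sqrt_le_sqrt key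
    _ = 613/1000*u + 409/1000 := Real.sqrt_sq (by linarith)

/-- pointwise lower bound for 1/sqrt on [1/3, 1] -/
lemma P4 {u : ℝ} (h1 : 1/3 ≤ u) (h2 : u ≤ 1) :
    183/100 - 92/100*u ≤ 1 / Real.sqrt u := by
  have hu0 : (0:ℝ) < u := by linarith
  have hL : (0:ℝ) < 183/100 - 92/100*u := by linarith
  have key : (183/100 - 92/100*u)^2 * u ≤ 1 := by
    nlinarith [mul_nonneg (mul_nonneg (by linarith : (0:ℝ) ≤ u - 1/3)
        (by linarith : (0:ℝ) ≤ 1 - u)) (by linarith : (0:ℝ) ≤ 1 - u),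
      mul_nonneg (mul_nonneg (by linarith : (0:ℝ) ≤ u - 1/3)
        (by linarith : (0:ℝ) ≤ 1 - u)) hu0.le,
      mul_nonneg (by linarith : (0:ℝ) ≤ u - 1/3) (by linarith : (0:ℝ) ≤ 1 - u),
      sq_nonneg (u - 2/3)]
  have h2' : Real.sqrt u ≤ 1/(183/100 - 92/100*u) := by
    have hu' : u ≤ (1/(183/100 - 92/100*u))^2 := by
      rw [div_pow, one_pow, le_div_iff₀ (by positivity)]
      linarith [key]
    calc Real.sqrt u ≤ Real.sqrt ((1/(183/100 - 92/100*u))^2) := Real.sqrt_le_sqrt hu'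
      _ = 1/(183/100 - 92/100*u) := Real.sqrt_sq (by positivity)
  calc 183/100 - 92/100*u = 1 / (1/(183/100 - 92/100*u)) := (one_div_one_div _).symm
    _ ≤ 1 / Real.sqrt u := one_div_le_one_div_of_le (Real.sqrt_pos.2 hu0) h2'

lemma sq35 : (Real.sqrt (3/5))^2 = 3/5 := Real.sq_sqrt (by norm_num)
lemma sq23 : (Real.sqrt (2/3))^2 = 2/3 := Real.sq_sqrt (by norm_num)

lemma Kc_ub : Kc (Real.sqrt (3/5)) ≤ π/4 * (2596/1000) := by
  have hlt : (Real.sqrt (3/5))^2 < 1 := by rw [sq35]; norm_num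
  unfold Kc
  have := lin_integral (101/100) (-(576/1000))
  rw [show (π/4 * (2596/1000) : ℝ) = π/4 * (2*(101/100) - (-(576/1000))) by norm_num,
    ← lin_integral (101/100) (-(576/1000))]
  apply intervalIntegral.integral_mono_on (by positivity) (intK hlt)
    ((by continuity : Continuous fun θ : ℝ => (101/100 : ℝ) - (-(576/1000)) * Real.sin θ^2).intervalIntegrable _ _)
  intro θ _
  have hs : Real.sin θ ^ 2 ≤ 1 := Real.sin_sq_le_one θ
  have hs0 : 0 ≤ Real.sin θ ^ 2 := sq_nonneg _
  have h := P2 (u := 1 - (Real.sqrt (3/5))^2 * Real.sin θ^2)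
    (by rw [sq35]; nlinarith) (by rw [sq35]; nlinarith)
  rw [sq35] at h ⊢
  calc 1 / Real.sqrt (1 - 3/5 * Real.sin θ^2) ≤ 197/100 - 96/100*(1 - 3/5 * Real.sin θ^2) := h
    _ = 101/100 - (-(576/1000)) * Real.sin θ^2 := by ring

lemma Ec_lb : π/4 * (1628/1000) ≤ Ec (Real.sqrt (3/5)) := by
  unfold Ec
  rw [show (π/4 * (1628/1000) : ℝ) = π/4 * (2*(997/1000) - 366/1000) by norm_num,
    ← lin_integral (997/1000) (366/1000)]
  apply intervalIntegral.integral_mono_on (by positivity)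
    ((by continuity : Continuous fun θ : ℝ => (997/1000 : ℝ) - (366/1000) * Real.sin θ^2).intervalIntegrable _ _)
    (intE _)
  intro θ _
  have hs : Real.sin θ ^ 2 ≤ 1 := Real.sin_sq_le_one θ
  have hs0 : 0 ≤ Real.sin θ ^ 2 := sq_nonneg _
  have h := P1 (u := 1 - (Real.sqrt (3/5))^2 * Real.sin θ^2)
    (by rw [sq35]; nlinarith) (by rw [sq35]; nlinarith)
  rw [sq35] at h ⊢
  calc (997/1000 : ℝ) - 366/1000 * Real.sin θ^2
      = 61/100*(1 - 3/5 * Real.sin θ^2) + 387/1000 := by ring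
    _ ≤ Real.sqrt (1 - 3/5 * Real.sin θ^2) := h

lemma Ec_ub : Ec (Real.sqrt (2/3)) ≤ π/4 * (2453/1500) := by
  unfold Ec
  rw [show (π/4 * (2453/1500) : ℝ) = π/4 * (2*(1022/1000) - 613/1500) by norm_num,
    ← lin_integral (1022/1000) (613/1500)]
  apply intervalIntegral.integral_mono_on (by positivity) (intE _)
    ((by continuity : Continuous fun θ : ℝ => (1022/1000 : ℝ) - (613/1500) * Real.sin θ^2).intervalIntegrable _ _)
  intro θ _
  have hs0 : 0 ≤ Real.sin θ ^ 2 := sq_nonneg _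
  have hs : Real.sin θ ^ 2 ≤ 1 := Real.sin_sq_le_one θ
  have h := P3 (u := 1 - (Real.sqrt (2/3))^2 * Real.sin θ^2) (by rw [sq23]; nlinarith)
  rw [sq23] at h ⊢
  calc Real.sqrt (1 - 2/3 * Real.sin θ^2)
      ≤ 613/1000*(1 - 2/3 * Real.sin θ^2) + 409/1000 := h
    _ = 1022/1000 - 613/1500 * Real.sin θ^2 := by ring

lemma Kc_lb : π/4 * (73/30) ≤ Kc (Real.sqrt (2/3)) := by
  have hlt : (Real.sqrt (2/3))^2 < 1 := by rw [sq23]; norm_num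
  unfold Kc
  rw [show (π/4 * (73/30) : ℝ) = π/4 * (2*(91/100) - (-(46/75))) by norm_num,
    ← lin_integral (91/100) (-(46/75))]
  apply intervalIntegral.integral_mono_on (by positivity)
    ((by continuity : Continuous fun θ : ℝ => (91/100 : ℝ) - (-(46/75)) * Real.sin θ^2).intervalIntegrable _ _)
    (intK hlt)
  intro θ _
  have hs0 : 0 ≤ Real.sin θ ^ 2 := sq_nonneg _
  have hs : Real.sin θ ^ 2 ≤ 1 := Real.sin_sq_le_one θ
  have h := P4 (u := 1 - (Real.sqrt (2/3))^2 * Real.sin θ^2)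
    (by rw [sq23]; nlinarith) (by rw [sq23]; nlinarith)
  rw [sq23] at h ⊢
  calc (91/100 : ℝ) - (-(46/75)) * Real.sin θ^2
      = 183/100 - 92/100*(1 - 2/3 * Real.sin θ^2) := by ring
    _ ≤ 1 / Real.sqrt (1 - 2/3 * Real.sin θ^2) := h

set_option maxHeartbeats 1000000 in
theorem stmt_8 (qstar : ℝ) (hqs : qstar ∈ Ioo (0:ℝ) 1) (hqs0 : 2 * Ec qstar = Kc qstar)
    (qhat : ℝ) (hqh : qhat ∈ Ioo (1 / Real.sqrt 2) qstar) (hqh0 : fc qhat = 0) :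
    3/5 < qhat^2 ∧ qhat^2 < 2/3 := by
  obtain ⟨hs1, hs2⟩ := hqs
  obtain ⟨hq1, hq2⟩ := hqh
  have h2pos : (0:ℝ) < 1 / Real.sqrt 2 := by positivity
  have hq0 : 0 < qhat := lt_trans h2pos hq1
  have hx1 : qhat^2 < 1 := by nlinarith
  have hinv2 : (1 / Real.sqrt 2)^2 = 1/2 := by
    rw [div_pow, one_pow, Real.sq_sqrt (by norm_num : (0:ℝ) ≤ 2)]
  have hxhalf : 1/2 < qhat^2 := by
    have := pow_lt_pow_left₀ hq1 h2pos.le (n := 2) (by norm_num)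
    rwa [hinv2] at this
  have hKpos : (0:ℝ) < Kc qhat := Kc_pos hx1
  constructor
  · by_contra h
    push_neg at h
    have hle : qhat ≤ Real.sqrt (3/5) := (Real.le_sqrt hq0.le (by norm_num)).2 h
    have hsq : (Real.sqrt (3/5))^2 < 1 := by rw [sq35]; norm_num
    have hE : Ec (Real.sqrt (3/5)) ≤ Ec qhat := Ec_anti hq0.le hle
    have hK : Kc qhat ≤ Kc (Real.sqrt (3/5)) := Kc_mono hq0.le hle hsq
    have hnum : 14 * Kc (Real.sqrt (3/5)) < 23 * Ec (Real.sqrt (3/5)) := by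
      have h1 := Kc_ub
      have h2 := Ec_lb
      have hpi := Real.pi_pos
      nlinarith
    have hdiff : 0 < 23 * Ec qhat - 14 * Kc qhat := by linarith
    have hkey : 23 * fc qhat = (8*qhat^2 - 8*qhat^4 - 1) * (23*Ec qhat - 14*Kc qhat)
        + (14*(8*qhat^2 - 8*qhat^4 - 1) - 23*(5*qhat^2 - 4*qhat^4 - 1)) * Kc qhat := by
      unfold fc; ring
    have ha : 0 < 8*qhat^2 - 8*qhat^4 - 1 := by
      nlinarith [mul_nonneg (by linarith : (0:ℝ) ≤ qhat^2 - 1/2)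
        (by linarith : (0:ℝ) ≤ 3/5 - qhat^2)]
    have hc : 0 ≤ 14*(8*qhat^2 - 8*qhat^4 - 1) - 23*(5*qhat^2 - 4*qhat^4 - 1) := by
      nlinarith [mul_nonneg (by linarith : (0:ℝ) ≤ 3 - 5*qhat^2)
        (by linarith : (0:ℝ) ≤ 4*qhat^2 + 3)]
    rw [hqh0, mul_zero] at hkey
    nlinarith [mul_pos ha hdiff, mul_nonneg hc hKpos.le]
  · by_contra h
    push_neg at h
    have hge : Real.sqrt (2/3) ≤ qhat := by
      have := Real.sqrt_le_sqrt h
      rwa [Real.sqrt_sq hq0.le] at this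
    have hE : Ec qhat ≤ Ec (Real.sqrt (2/3)) := Ec_anti (Real.sqrt_nonneg _) hge
    have hK : Kc (Real.sqrt (2/3)) ≤ Kc qhat := Kc_mono (Real.sqrt_nonneg _) hge hx1
    have hnum : 7 * Ec (Real.sqrt (2/3)) < 5 * Kc (Real.sqrt (2/3)) := by
      have h1 := Kc_lb
      have h2 := Ec_ub
      have hpi := Real.pi_pos
      nlinarith
    have hdiff : 7 * Ec qhat < 5 * Kc qhat := by linarith
    have hEpos : 0 ≤ Ec qhat := Ec_nonneg qhat
    have hc : 5*(8*qhat^2 - 8*qhat^4 - 1) - 7*(5*qhat^2 - 4*qhat^4 - 1) ≤ 0 := by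
      nlinarith [mul_nonneg (by linarith : (0:ℝ) ≤ 3*qhat^2 - 2)
        (by linarith : (0:ℝ) ≤ 4*qhat^2 + 1)]
    have hkey : 7 * fc qhat = (8*qhat^2 - 8*qhat^4 - 1) * (7*Ec qhat - 5*Kc qhat)
        + (5*(8*qhat^2 - 8*qhat^4 - 1) - 7*(5*qhat^2 - 4*qhat^4 - 1)) * Kc qhat := by
      unfold fc; ring
    rw [hqh0, mul_zero] at hkey
    rcases le_or_gt (8*qhat^2 - 8*qhat^4 - 1) 0 with hA | hA
    · have hb : 0 < 5*qhat^2 - 4*qhat^4 - 1 := by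
        nlinarith [mul_pos (by linarith : (0:ℝ) < 1 - qhat^2)
          (by linarith : (0:ℝ) < 4*qhat^2 - 1)]
      have hfc : fc qhat = (8*qhat^2 - 8*qhat^4 - 1)*Ec qhat
          - (5*qhat^2 - 4*qhat^4 - 1)*Kc qhat := by unfold fc; ring
      rw [hqh0] at hfc
      nlinarith [mul_nonpos_of_nonpos_of_nonneg hA hEpos, mul_pos hb hKpos]
    · have h1 : (8*qhat^2 - 8*qhat^4 - 1) * (7*Ec qhat - 5*Kc qhat) < 0 :=
        mul_neg_of_pos_of_neg hA (by linarith)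
      have h2 : (5*(8*qhat^2 - 8*qhat^4 - 1) - 7*(5*qhat^2 - 4*qhat^4 - 1)) * Kc qhat ≤ 0 :=
        mul_nonpos_of_nonpos_of_nonneg hc hKpos.le
      linarith
end

section
/- With m₂ = √(2/3), one has E(m₂) − (2/3)K(m₂) < 0 and consequently f(m₂) = −(5/9)K(m₂) + (7/9)E(m₂) < 0. -/
open Real Set Filter

noncomputable def gg (θ : ℝ) : ℝ :=
  (1 - 2 * Real.sin θ ^ 2) / (3 * Real.sqrt (1 - (2/3) * Real.sin θ ^ 2))

lemma key_lb (θ : ℝ) : (1:ℝ)/3 ≤ 1 - (2/3) * Real.sin θ ^ 2 := by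
  nlinarith [Real.sin_sq_le_one θ]

lemma sqrt_pos' (θ : ℝ) : 0 < Real.sqrt (1 - (2/3) * Real.sin θ ^ 2) :=
  Real.sqrt_pos.mpr (lt_of_lt_of_le (by norm_num) (key_lb θ))

lemma cont_sqrt : Continuous fun θ : ℝ => Real.sqrt (1 - (2/3) * Real.sin θ ^ 2) := by
  fun_prop

lemma cont_gg : Continuous gg := by
  unfold gg
  apply Continuous.div (by fun_prop) (by fun_prop)
  intro θ
  have := sqrt_pos' θ
  positivity

lemma cont_invsqrt : Continuous fun θ : ℝ => 1 / Real.sqrt (1 - (2/3) * Real.sin θ ^ 2) := by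
  apply Continuous.div continuous_const cont_sqrt
  intro θ
  exact (sqrt_pos' θ).ne'

set_option maxHeartbeats 1000000 in
theorem stmt_10 :
    Ec (Real.sqrt (2/3)) - (2/3) * Kc (Real.sqrt (2/3)) < 0 ∧
    fc (Real.sqrt (2/3)) =
      -(5/9) * Kc (Real.sqrt (2/3)) + (7/9) * Ec (Real.sqrt (2/3)) ∧
    fc (Real.sqrt (2/3)) < 0 := by
  have hq2 : (Real.sqrt (2/3)) ^ 2 = 2/3 := Real.sq_sqrt (by norm_num)
  have hK : Kc (Real.sqrt (2/3)) =
      ∫ θ in (0:ℝ)..(π/2), 1 / Real.sqrt (1 - (2/3) * Real.sin θ ^ 2) := by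
    unfold Kc; rw [hq2]
  have hE : Ec (Real.sqrt (2/3)) =
      ∫ θ in (0:ℝ)..(π/2), Real.sqrt (1 - (2/3) * Real.sin θ ^ 2) := by
    unfold Ec; rw [hq2]
  -- integrability facts
  have hiE : ∀ a b : ℝ, IntervalIntegrable
      (fun θ => Real.sqrt (1 - (2/3) * Real.sin θ ^ 2)) MeasureTheory.volume a b :=
    fun a b => cont_sqrt.intervalIntegrable a b
  have hiK : ∀ a b : ℝ, IntervalIntegrable
      (fun θ => (2/3) * (1 / Real.sqrt (1 - (2/3) * Real.sin θ ^ 2))) MeasureTheory.volume a b :=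
    fun a b => (continuous_const.mul cont_invsqrt).intervalIntegrable a b
  have hig : ∀ a b : ℝ, IntervalIntegrable gg MeasureTheory.volume a b :=
    fun a b => cont_gg.intervalIntegrable a b
  have hig' : ∀ a b : ℝ, IntervalIntegrable (fun θ => gg (π/2 - θ)) MeasureTheory.volume a b :=
    fun a b => (cont_gg.comp (continuous_const.sub continuous_id)).intervalIntegrable a b
  have hpi : (0:ℝ) < π/2 := by positivity
  -- E - (2/3) K as a single integral
  have hEK : Ec (Real.sqrt (2/3)) - (2/3) * Kc (Real.sqrt (2/3))
      = ∫ θ in (0:ℝ)..(π/2), gg θ := by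
    rw [hK, hE, ← intervalIntegral.integral_const_mul,
      ← intervalIntegral.integral_sub (hiE 0 (π/2)) (hiK 0 (π/2))]
    apply intervalIntegral.integral_congr
    intro θ _
    have hs := sqrt_pos' θ
    have hs2 : Real.sqrt (1 - (2/3) * Real.sin θ ^ 2) ^ 2 = 1 - (2/3) * Real.sin θ ^ 2 :=
      Real.sq_sqrt (le_trans (by norm_num) (key_lb θ))
    set s := Real.sqrt (1 - (2/3) * Real.sin θ ^ 2) with hsdef
    unfold gg
    rw [← hsdef]
    show s - 2/3 * (1 / s) = (1 - 2 * Real.sin θ ^ 2) / (3 * s)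
    have h1 : s - 2/3 * (1 / s) = (s ^ 2 - 2/3) / s := by
      field_simp
    rw [h1, hs2, div_eq_div_iff hs.ne' (by positivity)]
    ring
  -- fold the integral at π/4
  have hsplit : (∫ θ in (0:ℝ)..(π/2), gg θ)
      = (∫ θ in (0:ℝ)..(π/4), gg θ) + ∫ θ in (π/4 : ℝ)..(π/2), gg θ :=
    (intervalIntegral.integral_add_adjacent_intervals (hig 0 (π/4)) (hig (π/4) (π/2))).symm
  have hrefl : (∫ θ in (0:ℝ)..(π/4), gg (π/2 - θ)) = ∫ θ in (π/4 : ℝ)..(π/2), gg θ := by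
    rw [intervalIntegral.integral_comp_sub_left gg (π/2),
      show π/2 - π/4 = π/4 by ring, show π/2 - 0 = π/2 by ring]
  have hsum : (∫ θ in (0:ℝ)..(π/2), gg θ)
      = ∫ θ in (0:ℝ)..(π/4), (gg θ + gg (π/2 - θ)) := by
    rw [hsplit, ← hrefl, ← intervalIntegral.integral_add (hig 0 (π/4)) (hig' 0 (π/4))]
  -- the folded integrand is strictly negative on (0, π/4)
  have hneg : (∫ θ in (0:ℝ)..(π/2), gg θ) < 0 := by
    rw [hsum]
    have hpos : 0 < ∫ θ in (0:ℝ)..(π/4), -(gg θ + gg (π/2 - θ)) := by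
      apply intervalIntegral.intervalIntegral_pos_of_pos_on
      · exact ((hig 0 (π/4)).add (hig' 0 (π/4))).neg
      · intro θ hθ
        obtain ⟨h0, h4⟩ := hθ
        have hsin : 0 < Real.sin θ := Real.sin_pos_of_pos_of_lt_pi h0 (by
          have := Real.pi_pos; linarith)
        have hsc : Real.sin θ < Real.cos θ := by
          rw [← Real.sin_pi_div_two_sub]
          exact Real.sin_lt_sin_of_lt_of_le_pi_div_two (by linarith) (by linarith) (by linarith)
        have hsq : Real.sin θ ^ 2 < Real.cos θ ^ 2 := by nlinarith
        have hid := Real.sin_sq_add_cos_sq θ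
        -- abbreviations
        set A := Real.sqrt (1 - (2/3) * Real.sin θ ^ 2) with hA
        have hApos : 0 < A := sqrt_pos' θ
        have hA2 : A ^ 2 = 1 - (2/3) * Real.sin θ ^ 2 :=
          Real.sq_sqrt (le_trans (by norm_num) (key_lb θ))
        have hBarg : (0:ℝ) ≤ 1 - (2/3) * Real.cos θ ^ 2 := by nlinarith [Real.cos_sq_le_one θ]
        set B := Real.sqrt (1 - (2/3) * Real.cos θ ^ 2) with hB
        have hBpos : 0 < B := Real.sqrt_pos.mpr (by nlinarith [Real.cos_sq_le_one θ])
        have hB2 : B ^ 2 = 1 - (2/3) * Real.cos θ ^ 2 := Real.sq_sqrt hBarg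
        have hBA : B < A := by
          rw [hA, hB]
          apply Real.sqrt_lt_sqrt hBarg
          nlinarith
        have h12 : 0 < 1 - 2 * Real.sin θ ^ 2 := by nlinarith
        have hlt : (1 - 2 * Real.sin θ ^ 2) / (3 * A) < (1 - 2 * Real.sin θ ^ 2) / (3 * B) :=
          div_lt_div_of_pos_left h12 (by linarith) (by linarith)
        have hgsum : gg θ + gg (π/2 - θ)
            = (1 - 2 * Real.sin θ ^ 2) / (3 * A) - (1 - 2 * Real.sin θ ^ 2) / (3 * B) := by
          unfold gg
          rw [Real.sin_pi_div_two_sub]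
          rw [← hA, ← hB]
          have : 1 - 2 * Real.cos θ ^ 2 = -(1 - 2 * Real.sin θ ^ 2) := by nlinarith
          rw [this, neg_div]
          ring
        rw [hgsum]
        linarith
      · have := Real.pi_pos; linarith
    rw [intervalIntegral.integral_neg] at hpos
    linarith
  have hEKlt : Ec (Real.sqrt (2/3)) - (2/3) * Kc (Real.sqrt (2/3)) < 0 := by
    rw [hEK]; exact hneg
  -- K > 0
  have hKpos : 0 < Kc (Real.sqrt (2/3)) := by
    rw [hK]
    apply intervalIntegral.intervalIntegral_pos_of_pos_on
    · exact cont_invsqrt.intervalIntegrable 0 (π/2)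
    · intro θ _
      have := sqrt_pos' θ
      positivity
    · exact hpi
  -- fc identity
  have hfc : fc (Real.sqrt (2/3)) =
      -(5/9) * Kc (Real.sqrt (2/3)) + (7/9) * Ec (Real.sqrt (2/3)) := by
    unfold fc
    rw [show (Real.sqrt (2/3)) ^ 4 = ((Real.sqrt (2/3)) ^ 2) ^ 2 by ring, hq2]
    norm_num
  refine ⟨hEKlt, hfc, ?_⟩
  rw [hfc]
  nlinarith
end
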